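/- Let f : Γ → ℝ be symmetric, smooth, with f_i > 0, on an open symmetric cone Γ containing Γₙ, satisfying: for any σ < sup_Γ f and λ ∈ Γ, lim_{t→∞} f(tλ) > σ. If λ ∈ Γ and f_∞(λ) > σ fails, i.e. f_∞(λ) ≤ σ < sup_Γ f, then the set {μ ∈ Γ : f(μ) = σ, μ − λ ∈ Γₙ} is unbounded. -/
import Mathlib


/-- Contrapositive half of Székelyhidi's characterization of `C`-subsolutions:
if `f_∞(λ) ≤ σ < sup_Γ f` (some coordinate direction has all values of `f`
at most `σ`), then the set `{μ ∈ Γ : f(μ) = σ, μ − λ ∈ Γₙ}` is unbounded. -/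
theorem stmt16 (n : ℕ) (Γ : Set (Fin n → ℝ)) (f : (Fin n → ℝ) → ℝ)
    (hopen : IsOpen Γ)
    (hsymm : ∀ (σp : Equiv.Perm (Fin n)) (x : Fin n → ℝ), x ∈ Γ →
      x ∘ σp ∈ Γ ∧ f (x ∘ σp) = f x)
    (hposincl : {x : Fin n → ℝ | ∀ i, 0 < x i} ⊆ Γ)
    (hcone : ∀ x ∈ Γ, ∀ t : ℝ, 0 < t → t • x ∈ Γ)
    (hadd : ∀ x ∈ Γ, ∀ v : Fin n → ℝ, (∀ i, 0 < v i) → x + v ∈ Γ)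
    (hsmooth : ContDiffOn ℝ (⊤ : ℕ∞) f Γ)
    (hmono : ∀ x ∈ Γ, ∀ y ∈ Γ, (∀ i, x i ≤ y i) → x ≠ y → f x < f y)
    (hray : ∀ σ' : ℝ, σ' < sSup (f '' Γ) → ∀ x ∈ Γ, ∃ T : ℝ, ∀ t ≥ T, σ' < f (t • x))
    (lam : Fin n → ℝ) (hlam : lam ∈ Γ) (σ : ℝ) (hσ : σ < sSup (f '' Γ))
    (hfail : ∃ i : Fin n, ∀ R > lam i, f (Function.update lam i R) ≤ σ) :
    ¬ Bornology.IsBounded {μ : Fin n → ℝ | μ ∈ Γ ∧ f μ = σ ∧ ∀ i, lam i < μ i} := by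
  obtain ⟨i, hi⟩ := hfail
  intro hbdd
  -- monotonicity, non-strict version
  have fmono : ∀ x ∈ Γ, ∀ y ∈ Γ, (∀ j, x j ≤ y j) → f x ≤ f y := by
    intro x hx y hy hxy
    by_cases hxy' : x = y
    · rw [hxy']
    · exact le_of_lt (hmono x hx y hy hxy hxy')
  -- a small ball around lam is in Γ
  obtain ⟨ε, hε, hball⟩ := Metric.isOpen_iff.mp hopen lam hlam
  set δ := ε / 2 with hδdef
  have hδ : 0 < δ := by positivity
  have hlam' : lam - δ • (1 : Fin n → ℝ) ∈ Γ := by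
    apply hball
    rw [Metric.mem_ball, dist_eq_norm]
    have : lam - δ • (1 : Fin n → ℝ) - lam = -(δ • (1 : Fin n → ℝ)) := by ring
    rw [this, norm_neg]
    have h1 : ‖(1 : Fin n → ℝ)‖ ≤ 1 := by
      apply (pi_norm_le_iff_of_nonneg zero_le_one).mpr
      intro j; simp
    calc ‖δ • (1 : Fin n → ℝ)‖ ≤ ‖δ‖ * ‖(1 : Fin n → ℝ)‖ := norm_smul_le _ _
    _ ≤ |δ| * 1 := by
        have : ‖δ‖ = |δ| := rfl
        rw [this]
        exact mul_le_mul_of_nonneg_left h1 (abs_nonneg δ)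
    _ = δ := by rw [mul_one, abs_of_pos hδ]
    _ < ε := by rw [hδdef]; linarith
  -- membership of updated points shifted by t ≥ 0
  have hmem : ∀ R > lam i, ∀ t : ℝ, 0 ≤ t →
      Function.update lam i R + t • (1 : Fin n → ℝ) ∈ Γ := by
    intro R hR t ht
    have : Function.update lam i R + t • (1 : Fin n → ℝ)
        = (lam - δ • (1 : Fin n → ℝ)) +
          (Function.update lam i R + t • (1 : Fin n → ℝ) - (lam - δ • (1 : Fin n → ℝ))) := by
      ring
    rw [this]
    apply hadd _ hlam'
    intro j
    by_cases hji : j = i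
    · subst hji
      simp only [Pi.add_apply, Pi.sub_apply, Pi.smul_apply, Pi.one_apply,
        Function.update_self, smul_eq_mul, mul_one]
      linarith
    · simp only [Pi.add_apply, Pi.sub_apply, Pi.smul_apply, Pi.one_apply,
        Function.update_of_ne hji, smul_eq_mul, mul_one]
      linarith
  -- f at updated points is strictly below σ
  have hstrict : ∀ R > lam i, f (Function.update lam i R) < σ := by
    intro R hR
    rcases lt_or_eq_of_le (hi R hR) with h | h
    · exact h
    · exfalso
      have h1 : f (Function.update lam i R) < f (Function.update lam i (R + 1)) := by
        apply hmono
        · have := hmem R hR 0 le_rfl; simpa using this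
        · have := hmem (R + 1) (by linarith) 0 le_rfl; simpa using this
        · intro j
          by_cases hji : j = i
          · subst hji; simp
          · simp [Function.update_of_ne hji]
        · intro hc
          have := congrFun hc i
          simp at this
      have h2 := hi (R + 1) (by linarith)
      linarith
  -- bound on the set
  obtain ⟨r, hr⟩ := (Metric.isBounded_iff_subset_closedBall 0).mp hbdd
  set R : ℝ := max (lam i + 1) (r + 1) with hRdef
  have hRlam : lam i < R := lt_of_lt_of_le (by linarith) (le_max_left _ _)
  have hRr : r < R := lt_of_lt_of_le (by linarith) (le_max_right _ _)
  -- far along the diagonal, f exceeds σ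
  have hone : (1 : Fin n → ℝ) ∈ Γ := hposincl (fun j => by norm_num)
  obtain ⟨T, hT⟩ := hray σ hσ 1 hone
  set T' : ℝ := max T 1 with hT'def
  have hT'pos : (0 : ℝ) < T' := lt_of_lt_of_le one_pos (le_max_right _ _)
  have hT'1 : T' • (1 : Fin n → ℝ) ∈ Γ := hposincl (fun j => by
    simpa using hT'pos)
  have hfT' : σ < f (T' • (1 : Fin n → ℝ)) := hT T' (le_max_left _ _)
  -- choose t₀ large enough
  set x : Fin n → ℝ := Function.update lam i R with hxdef
  set t₀ : ℝ := T' + ∑ j, |x j| with ht₀def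
  have ht₀nn : 0 ≤ t₀ := by
    have : (0:ℝ) ≤ ∑ j, |x j| := Finset.sum_nonneg fun j _ => abs_nonneg _
    linarith
  have ht₀big : ∀ j, T' ≤ x j + t₀ := by
    intro j
    have h1 : |x j| ≤ ∑ k, |x k| :=
      Finset.single_le_sum (fun k _ => abs_nonneg (x k)) (Finset.mem_univ j)
    have h2 : -x j ≤ |x j| := neg_le_abs _
    rw [ht₀def]; linarith
  have hgt₀ : σ < f (x + t₀ • (1 : Fin n → ℝ)) := by
    refine lt_of_lt_of_le hfT' ?_
    apply fmono _ hT'1 _ (hmem R hRlam t₀ ht₀nn)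
    intro j
    simp only [Pi.smul_apply, Pi.one_apply, smul_eq_mul, mul_one, Pi.add_apply]
    exact ht₀big j
  have hg0 : f (x + (0:ℝ) • (1 : Fin n → ℝ)) < σ := by
    simpa using hstrict R hRlam
  -- continuity of g on [0, t₀]
  have hcontf : ContinuousOn f Γ := hsmooth.continuousOn
  have hgcont : ContinuousOn (fun t : ℝ => f (x + t • (1 : Fin n → ℝ))) (Set.Icc 0 t₀) := by
    apply hcontf.comp
    · exact (continuous_const.add (continuous_id.smul continuous_const)).continuousOn
    · intro t ht
      exact hmem R hRlam t ht.1
  -- intermediate value theorem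
  have hIVT := intermediate_value_Icc (a := (0:ℝ)) (b := t₀) (by linarith) hgcont
  have hσmem : σ ∈ Set.Icc (f (x + (0:ℝ) • (1 : Fin n → ℝ))) (f (x + t₀ • (1 : Fin n → ℝ))) :=
    ⟨le_of_lt hg0, le_of_lt hgt₀⟩
  obtain ⟨t, htmem, htval⟩ := hIVT hσmem
  have htpos : 0 < t := by
    rcases lt_or_eq_of_le htmem.1 with h | h
    · exact h
    · exfalso
      subst h
      simp only at htval
      rw [htval] at hg0
      exact lt_irrefl σ hg0
  -- the witness point
  set μ : Fin n → ℝ := x + t • (1 : Fin n → ℝ) with hμdef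
  have hμS : μ ∈ {μ : Fin n → ℝ | μ ∈ Γ ∧ f μ = σ ∧ ∀ i, lam i < μ i} := by
    refine ⟨hmem R hRlam t (le_of_lt htpos), htval, ?_⟩
    intro j
    by_cases hji : j = i
    · subst hji
      simp only [hμdef, Pi.add_apply, Pi.smul_apply, Pi.one_apply, smul_eq_mul, mul_one,
        hxdef, Function.update_self]
      linarith
    · simp only [hμdef, Pi.add_apply, Pi.smul_apply, Pi.one_apply, smul_eq_mul, mul_one,
        hxdef, Function.update_of_ne hji]
      linarith
  have hμball := hr hμS
  rw [Metric.mem_closedBall, dist_zero_right] at hμball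
  have hμi : μ i = R + t := by
    simp [hμdef, hxdef]
  have : |μ i| ≤ ‖μ‖ := by
    have := norm_le_pi_norm μ i
    simpa using this
  have : R + t ≤ r := by
    rw [hμi] at this
    calc R + t ≤ |R + t| := le_abs_self _
    _ ≤ ‖μ‖ := this
    _ ≤ r := hμball
  linarith
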